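/- arXiv:2106.05355 — 2 statements merged into one kernel-verified Lean document; each statement's English description precedes it below -/
import Mathlib

section
/- For 2 < c < (3+√5)/2 and n = ck with k sufficiently large, the intersecting family A_3(n,k) satisfies |D(A_3(n,k))| > |D(S_1)| = ∑_{ℓ=0}^{k-1} C(n-1,ℓ). Precisely, |D(S_1)| - |D(A_3(n,k))| = C(n-4,k-1) - C(n-3,k-2), which is negative iff n² - (3k+2)n + k² + 6k - 1 < 0. -/
open Finset

def diffFam (F : Finset (Finset ℕ)) : Finset (Finset ℕ) :=
  (F ×ˢ F).image fun p => p.1 \ p.2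

def fullStar1 (n k : ℕ) : Finset (Finset ℕ) :=
  ((Finset.Icc 1 n).powersetCard k).filter fun A => 1 ∈ A

/-- The family `A_3(n,k)`. -/
def famA3 (n k : ℕ) : Finset (Finset ℕ) :=
  (((Finset.Icc 1 n).powersetCard k).filter fun A =>
      1 ∈ A ∧ (A ∩ ({2, 3, 4} : Finset ℕ)).Nonempty) ∪
  (((Finset.Icc 1 n).powersetCard k).filter fun A => ({2, 3, 4} : Finset ℕ) ⊆ A)

lemma count_card_lt (s : Finset ℕ) (k : ℕ) :
    (s.powerset.filter fun B => B.card < k).card = ∑ ℓ ∈ range k, s.card.choose ℓ := by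
  induction k with
  | zero => simp
  | succ k ih =>
    have h : (s.powerset.filter fun B => B.card < k + 1)
        = (s.powerset.filter fun B => B.card < k) ∪ s.powersetCard k := by
      ext B
      simp only [mem_filter, mem_powerset, mem_union, mem_powersetCard]
      constructor
      · rintro ⟨h1, h2⟩
        rcases Nat.lt_succ_iff_lt_or_eq.mp h2 with h | h
        · exact Or.inl ⟨h1, h⟩
        · exact Or.inr ⟨h1, h⟩
      · rintro (⟨h1, h2⟩ | ⟨h1, h2⟩) <;> exact ⟨h1, by omega⟩
    have hd : Disjoint (s.powerset.filter fun B => B.card < k) (s.powersetCard k) := by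
      rw [Finset.disjoint_left]
      intro B hB hB'
      simp only [mem_filter, mem_powerset] at hB
      rw [mem_powersetCard] at hB'
      omega
    rw [h, card_union_of_disjoint hd, ih, card_powersetCard, sum_range_succ]

lemma count_subset_card_lt (s t : Finset ℕ) (hts : t ⊆ s) (k : ℕ) :
    (s.powerset.filter fun B => t ⊆ B ∧ B.card < k + t.card).card
      = ((s \ t).powerset.filter fun B => B.card < k).card := by
  apply card_bij (fun B _ => B \ t)
  · intro B hB
    simp only [mem_filter, mem_powerset] at hB ⊢
    obtain ⟨hBs, htB, hcard⟩ := hB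
    refine ⟨sdiff_subset_sdiff hBs (Finset.Subset.refl t), ?_⟩
    rw [card_sdiff_of_subset htB]
    have := Finset.card_le_card htB
    omega
  · intro B1 h1 B2 h2 h
    simp only [mem_filter, mem_powerset] at h1 h2
    have e1 := Finset.sdiff_union_of_subset h1.2.1
    have e2 := Finset.sdiff_union_of_subset h2.2.1
    rw [← e1, ← e2, h]
  · intro B' hB'
    simp only [mem_filter, mem_powerset] at hB'
    obtain ⟨hB's, hcard⟩ := hB'
    have hdisj : Disjoint B' t := (Finset.subset_sdiff.mp hB's).2
    refine ⟨B' ∪ t, ?_, ?_⟩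
    · simp only [mem_filter, mem_powerset]
      refine ⟨Finset.union_subset ((Finset.subset_sdiff.mp hB's).1) hts,
        Finset.subset_union_right, ?_⟩
      rw [Finset.card_union_of_disjoint hdisj]
      omega
    · rw [Finset.union_sdiff_cancel_right hdisj]

lemma mem_diffFam {F : Finset (Finset ℕ)} {B : Finset ℕ} :
    B ∈ diffFam F ↔ ∃ A ∈ F, ∃ A' ∈ F, A \ A' = B := by
  simp only [diffFam, Finset.mem_image, Finset.mem_product, Prod.exists]
  constructor
  · rintro ⟨a, b, ⟨ha, hb⟩, h⟩; exact ⟨a, ha, b, hb, h⟩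
  · rintro ⟨a, ha, b, hb, h⟩; exact ⟨a, b, ⟨ha, hb⟩, h⟩

lemma mem_famA3 {n k : ℕ} {A : Finset ℕ} :
    A ∈ famA3 n k ↔ (A ⊆ Icc 1 n ∧ A.card = k) ∧
      ((1 ∈ A ∧ (A ∩ ({2,3,4} : Finset ℕ)).Nonempty) ∨ ({2,3,4} : Finset ℕ) ⊆ A) := by
  simp only [famA3, mem_union, mem_filter, mem_powersetCard]
  tauto

lemma mem_fullStar1 {n k : ℕ} {A : Finset ℕ} :
    A ∈ fullStar1 n k ↔ (A ⊆ Icc 1 n ∧ A.card = k) ∧ 1 ∈ A := by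
  simp only [fullStar1, mem_filter, mem_powersetCard]

lemma build_pair {n k : ℕ} {B A' req : Finset ℕ} (hA' : A' ∈ famA3 n k)
    (hBA' : Disjoint B A') (hreq : req ⊆ A') (hB : B ⊆ Icc 1 n)
    (hBreq : Disjoint B req)
    (hcard : B.card + req.card ≤ k)
    (h1 : 1 ∈ B ∪ req) (hT : ((B ∪ req) ∩ ({2,3,4} : Finset ℕ)).Nonempty) :
    B ∈ diffFam (famA3 n k) := by
  obtain ⟨⟨hA's, hA'c⟩, _⟩ := mem_famA3.mp hA'
  obtain ⟨C, hCsub, hCcard⟩ := Finset.exists_subset_card_eq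
    (n := k - B.card - req.card) (s := A' \ req) (by rw [card_sdiff_of_subset hreq]; omega)
  set A : Finset ℕ := B ∪ (req ∪ C) with hAdef
  have hreqC : Disjoint req C := Finset.disjoint_left.mpr fun x hx hxC =>
    (Finset.mem_sdiff.mp (hCsub hxC)).2 hx
  have hBC : Disjoint B C := Finset.disjoint_left.mpr fun x hx hxC =>
    (Finset.disjoint_left.mp hBA') hx (Finset.mem_sdiff.mp (hCsub hxC)).1
  have hBrC : Disjoint B (req ∪ C) := Finset.disjoint_union_right.mpr ⟨hBreq, hBC⟩
  have hAc : A.card = k := by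
    rw [hAdef, card_union_of_disjoint hBrC, card_union_of_disjoint hreqC, hCcard]
    have := Finset.card_le_card hreq
    omega
  have hAsub : A ⊆ Icc 1 n := by
    refine Finset.union_subset hB (Finset.union_subset (hreq.trans hA's) ?_)
    exact (hCsub.trans (Finset.sdiff_subset)).trans hA's
  have hAmem : A ∈ famA3 n k := by
    refine mem_famA3.mpr ⟨⟨hAsub, hAc⟩, Or.inl ⟨?_, ?_⟩⟩
    · rcases Finset.mem_union.mp h1 with h | h
      · exact Finset.mem_union_left _ h
      · exact Finset.mem_union_right _ (Finset.mem_union_left _ h)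
    · obtain ⟨x, hx⟩ := hT
      rw [Finset.mem_inter, Finset.mem_union] at hx
      refine ⟨x, Finset.mem_inter.mpr ⟨?_, hx.2⟩⟩
      rcases hx.1 with h | h
      · exact Finset.mem_union_left _ h
      · exact Finset.mem_union_right _ (Finset.mem_union_left _ h)
  refine mem_diffFam.mpr ⟨A, hAmem, A', hA', ?_⟩
  rw [hAdef, Finset.union_sdiff_distrib]
  have h2 : (req ∪ C) \ A' = ∅ := Finset.sdiff_eq_empty_iff_subset.mpr
    (Finset.union_subset hreq (hCsub.trans Finset.sdiff_subset))
  rw [h2, Finset.union_empty, Finset.sdiff_eq_self_of_disjoint hBA']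

-- the free pool
lemma pool (n k : ℕ) (B : Finset ℕ) (hk : 10 ≤ k) (hn : 2*k+1 ≤ n)
    (hB : B ⊆ Icc 1 n) (hBc : B.card < k) :
    ∃ C : Finset ℕ, C ⊆ Icc 1 n \ (B ∪ {1,2,3,4}) ∧ C.card = k - 2 := by
  apply Finset.exists_subset_card_eq
  have hc4 : (B ∪ {1,2,3,4} : Finset ℕ).card ≤ B.card + 4 :=
    le_trans (Finset.card_union_le _ _) (by norm_num)
  have := Finset.le_card_sdiff (B ∪ {1,2,3,4}) (Icc 1 n)
  rw [Nat.card_Icc] at this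
  omega

lemma diffFam_famA3_eq (n k : ℕ) (hk : 10 ≤ k) (hn : 2*k+1 ≤ n) :
    diffFam (famA3 n k) = (Icc 1 n).powerset.filter (fun B =>
      (1 ∈ B ∧ B ∩ ({2,3,4} : Finset ℕ) = ∅ ∧ B.card < k) ∨
      (1 ∉ B ∧ B ∩ ({2,3,4} : Finset ℕ) = ∅ ∧ B.card + 1 < k) ∨
      (1 ∉ B ∧ (B ∩ ({2,3,4} : Finset ℕ)).Nonempty ∧
        ¬ (({2,3,4} : Finset ℕ) ⊆ B) ∧ B.card < k)) := by
  have h4n : ({1,2,3,4} : Finset ℕ) ⊆ Icc 1 n := by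
    intro x hx; fin_cases hx <;> simp [Finset.mem_Icc] <;> omega
  ext B
  rw [mem_diffFam, mem_filter, mem_powerset]
  constructor
  · rintro ⟨A, hA, A', hA', rfl⟩
    obtain ⟨⟨hAs, hAc⟩, hAalt⟩ := mem_famA3.mp hA
    obtain ⟨⟨hA's, hA'c⟩, hA'alt⟩ := mem_famA3.mp hA'
    have hBs : A \ A' ⊆ Icc 1 n := Finset.sdiff_subset.trans hAs
    refine ⟨hBs, ?_⟩
    by_cases h1 : 1 ∈ A \ A'
    · -- case 1 ∈ B
      left
      have h1A' : 1 ∉ A' := (Finset.mem_sdiff.mp h1).2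
      have hTA' : ({2,3,4} : Finset ℕ) ⊆ A' := by
        rcases hA'alt with ⟨h, _⟩ | h
        · exact absurd h h1A'
        · exact h
      constructor; · exact h1
      constructor
      · ext x
        simp only [Finset.mem_inter, Finset.mem_sdiff, Finset.notMem_empty, iff_false]
        rintro ⟨⟨-, hxA'⟩, hxT⟩
        exact hxA' (hTA' hxT)
      · -- card: A ∩ T nonempty, element in A ∩ A'
        have hAT : (A ∩ ({2,3,4} : Finset ℕ)).Nonempty := by
          rcases hAalt with ⟨_, h⟩ | h
          · exact h
          · exact ⟨2, Finset.mem_inter.mpr ⟨h (by simp), by simp⟩⟩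
        obtain ⟨t, ht⟩ := hAT
        rw [Finset.mem_inter] at ht
        have : A \ A' ⊆ A.erase t :=
          fun x hx => Finset.mem_erase.mpr ⟨fun h => (Finset.mem_sdiff.mp hx).2
            (h ▸ hTA' ht.2), (Finset.mem_sdiff.mp hx).1⟩
        have := Finset.card_le_card this
        rw [Finset.card_erase_of_mem ht.1, hAc] at this
        omega
    · -- 1 ∉ B
      by_cases hTB : ((A \ A') ∩ ({2,3,4} : Finset ℕ)).Nonempty
      · -- case 3
        right; right
        refine ⟨h1, hTB, ?_, ?_⟩
        · intro hsub
          have hTA'e : ∀ t ∈ ({2,3,4} : Finset ℕ), t ∉ A' := fun t ht =>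
            (Finset.mem_sdiff.mp (hsub ht)).2
          rcases hA'alt with ⟨_, ⟨t, ht⟩⟩ | h
          · rw [Finset.mem_inter] at ht; exact hTA'e t ht.2 ht.1
          · exact hTA'e 2 (by simp) (h (by simp))
        · -- find x ∈ A ∩ A'
          have hx : ∃ x, x ∈ A ∧ x ∈ A' := by
            rcases hAalt with ⟨h1A, hAT⟩ | hTA
            · rcases hA'alt with ⟨h1A', _⟩ | hTA'
              · exact ⟨1, h1A, h1A'⟩
              · obtain ⟨t, ht⟩ := hAT
                rw [Finset.mem_inter] at ht
                exact ⟨t, ht.1, hTA' ht.2⟩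
            · rcases hA'alt with ⟨h1A', ⟨t, ht⟩⟩ | hTA'
              · rw [Finset.mem_inter] at ht
                exact ⟨t, hTA ht.2, ht.1⟩
              · exact ⟨2, hTA (by simp), hTA' (by simp)⟩
          obtain ⟨x, hxA, hxA'⟩ := hx
          have : A \ A' ⊆ A.erase x := fun y hy => Finset.mem_erase.mpr
            ⟨fun h => (Finset.mem_sdiff.mp hy).2 (h ▸ hxA'), (Finset.mem_sdiff.mp hy).1⟩
          have := Finset.card_le_card this
          rw [Finset.card_erase_of_mem hxA, hAc] at this
          omega
      · -- case 2
        right; left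
        rw [Finset.not_nonempty_iff_eq_empty] at hTB
        refine ⟨h1, hTB, ?_⟩
        have key : ∃ x y, x ≠ y ∧ x ∈ A ∧ x ∈ A' ∧ y ∈ A ∧ y ∈ A' := by
          have hmemB : ∀ x, x ∈ A → x ∉ A \ A' → x ∈ A' := fun x hx hnx => by
            by_contra h; exact hnx (Finset.mem_sdiff.mpr ⟨hx, h⟩)
          have hTnB : ∀ t ∈ ({2,3,4} : Finset ℕ), t ∉ A \ A' := by
            intro t ht hmem
            have : t ∈ (A \ A') ∩ ({2,3,4} : Finset ℕ) := Finset.mem_inter.mpr ⟨hmem, ht⟩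
            rw [hTB] at this; exact absurd this (Finset.notMem_empty t)
          rcases hAalt with ⟨h1A, ⟨t, ht⟩⟩ | hTA
          · rw [Finset.mem_inter] at ht
            have h1A' : 1 ∈ A' := hmemB 1 h1A h1
            have htA' : t ∈ A' := hmemB t ht.1 (hTnB t ht.2)
            have ht1 : t ≠ 1 := by
              have h2 := ht.2
              fin_cases h2 <;> norm_num
            exact ⟨1, t, fun h => ht1 h.symm, h1A, h1A', ht.1, htA'⟩
          · have h2 : (2:ℕ) ∈ A' := hmemB 2 (hTA (by simp)) (hTnB 2 (by simp))
            have h3 : (3:ℕ) ∈ A' := hmemB 3 (hTA (by simp)) (hTnB 3 (by simp))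
            exact ⟨2, 3, by omega, hTA (by simp), h2, hTA (by simp), h3⟩
        obtain ⟨x, y, hxy, hxA, hxA', hyA, hyA'⟩ := key
        have hsub : A \ A' ⊆ (A.erase x).erase y := by
          intro z hz
          rw [Finset.mem_sdiff] at hz
          refine Finset.mem_erase.mpr ⟨fun h => hz.2 (h ▸ hyA'),
            Finset.mem_erase.mpr ⟨fun h => hz.2 (h ▸ hxA'), hz.1⟩⟩
        have hle := Finset.card_le_card hsub
        have hyx : y ∈ A.erase x := Finset.mem_erase.mpr ⟨fun h => hxy h.symm, hyA⟩
        rw [Finset.card_erase_of_mem hyx, Finset.card_erase_of_mem hxA, hAc] at hle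
        omega
  · rintro ⟨hBs, hcase⟩
    rcases hcase with ⟨h1B, hBT, hBc⟩ | ⟨h1B, hBT, hBc⟩ | ⟨h1B, hBT, hTB, hBc⟩
    · -- P1 : A' = {2,3,4} ∪ C', req = {2}
      obtain ⟨C, hCsub, hCc⟩ := pool n k B hk hn hBs hBc
      obtain ⟨C', hC'C, hC'c⟩ := Finset.exists_subset_card_eq
        (n := k - 3) (s := C) (by omega)
      have hC'sub := hC'C.trans hCsub
      have hCI : C' ⊆ Icc 1 n := hC'sub.trans Finset.sdiff_subset
      have hC4 : Disjoint C' ({1,2,3,4} : Finset ℕ) := Finset.disjoint_left.mpr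
        fun x hx hx4 => ((Finset.mem_sdiff.mp (hC'sub hx)).2
          (Finset.mem_union_right _ hx4))
      have hCB : Disjoint C' B := Finset.disjoint_left.mpr
        fun x hx hxB => ((Finset.mem_sdiff.mp (hC'sub hx)).2
          (Finset.mem_union_left _ hxB))
      have hBT' : Disjoint B ({2,3,4} : Finset ℕ) := by
        rw [Finset.disjoint_iff_inter_eq_empty]; exact hBT
      have hA'mem : ({2,3,4} : Finset ℕ) ∪ C' ∈ famA3 n k := by
        refine mem_famA3.mpr ⟨⟨Finset.union_subset
          (fun x hx => h4n (by fin_cases hx <;> simp)) hCI, ?_⟩,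
          Or.inr Finset.subset_union_left⟩
        rw [Finset.card_union_of_disjoint, hC'c]
        · norm_num; omega
        · exact Finset.disjoint_left.mpr fun x hx hxC =>
            Finset.disjoint_left.mp hC4 hxC (by fin_cases hx <;> simp)
      refine mem_diffFam.mp (build_pair (req := {2}) hA'mem ?_ ?_ hBs ?_ ?_ ?_ ?_)
      · exact Finset.disjoint_union_right.mpr ⟨hBT', hCB.symm⟩
      · intro x hx
        rw [Finset.mem_singleton] at hx
        exact Finset.mem_union_left _ (by simp [hx])
      · exact Finset.disjoint_singleton_right.mpr
          (Finset.disjoint_right.mp hBT' (by simp))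
      · simpa using hBc
      · exact Finset.mem_union_left _ h1B
      · exact ⟨2, Finset.mem_inter.mpr ⟨Finset.mem_union_right _ (by simp), by simp⟩⟩
    · -- P2 : A' = {1,2} ∪ C, req = {1,2}
      obtain ⟨C, hCsub, hCc⟩ := pool n k B hk hn hBs (by omega)
      have hCI : C ⊆ Icc 1 n := hCsub.trans Finset.sdiff_subset
      have hC4 : Disjoint C ({1,2,3,4} : Finset ℕ) := Finset.disjoint_left.mpr
        fun x hx hx4 => ((Finset.mem_sdiff.mp (hCsub hx)).2
          (Finset.mem_union_right _ hx4))
      have hCB : Disjoint C B := Finset.disjoint_left.mpr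
        fun x hx hxB => ((Finset.mem_sdiff.mp (hCsub hx)).2
          (Finset.mem_union_left _ hxB))
      have hBT' : Disjoint B ({2,3,4} : Finset ℕ) := by
        rw [Finset.disjoint_iff_inter_eq_empty]; exact hBT
      have hB12 : Disjoint B ({1,2} : Finset ℕ) := by
        rw [Finset.disjoint_left]
        intro x hxB hx12
        rw [Finset.mem_insert, Finset.mem_singleton] at hx12
        rcases hx12 with rfl | rfl
        · exact h1B hxB
        · exact Finset.disjoint_left.mp hBT' hxB (by simp)
      have hA'mem : ({1,2} : Finset ℕ) ∪ C ∈ famA3 n k := by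
        refine mem_famA3.mpr ⟨⟨Finset.union_subset
          (fun x hx => h4n (by fin_cases hx <;> simp)) hCI, ?_⟩,
          Or.inl ⟨Finset.mem_union_left _ (by simp),
            ⟨2, Finset.mem_inter.mpr ⟨Finset.mem_union_left _ (by simp), by simp⟩⟩⟩⟩
        rw [Finset.card_union_of_disjoint, hCc]
        · norm_num; omega
        · exact Finset.disjoint_left.mpr fun x hx hxC =>
            Finset.disjoint_left.mp hC4 hxC (by fin_cases hx <;> simp)
      refine mem_diffFam.mp (build_pair (req := {1,2}) hA'mem ?_
        Finset.subset_union_left hBs hB12 ?_ ?_ ?_)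
      · exact Finset.disjoint_union_right.mpr ⟨hB12, hCB.symm⟩
      · have : ({1,2} : Finset ℕ).card = 2 := by rfl
        omega
      · exact Finset.mem_union_right _ (by simp)
      · exact ⟨2, Finset.mem_inter.mpr ⟨Finset.mem_union_right _ (by simp), by simp⟩⟩
    · -- P3 : pick t ∈ T \ B, A' = {1,t} ∪ C, req = {1}
      obtain ⟨t, htT, htB⟩ : ∃ t ∈ ({2,3,4} : Finset ℕ), t ∉ B := by
        by_contra h
        push_neg at h
        exact hTB h
      have ht1 : t ≠ 1 := by fin_cases htT <;> norm_num
      obtain ⟨C, hCsub, hCc⟩ := pool n k B hk hn hBs hBc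
      have hCI : C ⊆ Icc 1 n := hCsub.trans Finset.sdiff_subset
      have hC4 : Disjoint C ({1,2,3,4} : Finset ℕ) := Finset.disjoint_left.mpr
        fun x hx hx4 => ((Finset.mem_sdiff.mp (hCsub hx)).2
          (Finset.mem_union_right _ hx4))
      have hCB : Disjoint C B := Finset.disjoint_left.mpr
        fun x hx hxB => ((Finset.mem_sdiff.mp (hCsub hx)).2
          (Finset.mem_union_left _ hxB))
      have ht4 : t ∈ ({1,2,3,4} : Finset ℕ) := by fin_cases htT <;> simp
      have hA'mem : ({1, t} : Finset ℕ) ∪ C ∈ famA3 n k := by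
        refine mem_famA3.mpr ⟨⟨Finset.union_subset ?_ hCI, ?_⟩,
          Or.inl ⟨Finset.mem_union_left _ (by simp),
            ⟨t, Finset.mem_inter.mpr ⟨Finset.mem_union_left _ (by simp), htT⟩⟩⟩⟩
        · intro x hx
          rw [Finset.mem_insert, Finset.mem_singleton] at hx
          rcases hx with rfl | rfl
          · exact h4n (by simp)
          · exact h4n ht4
        · rw [Finset.card_union_of_disjoint, Finset.card_insert_of_notMem
            (by simpa using Ne.symm ht1), Finset.card_singleton, hCc]
          · omega
          · refine Finset.disjoint_left.mpr fun x hx hxC => ?_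
            rw [Finset.mem_insert, Finset.mem_singleton] at hx
            rcases hx with rfl | rfl
            · exact Finset.disjoint_left.mp hC4 hxC (by simp)
            · exact Finset.disjoint_left.mp hC4 hxC ht4
      refine mem_diffFam.mp (build_pair (req := {1}) hA'mem ?_ ?_ hBs ?_ ?_ ?_ ?_)
      · refine Finset.disjoint_union_right.mpr ⟨?_, hCB.symm⟩
        rw [Finset.disjoint_left]
        intro x hxB hx
        rw [Finset.mem_insert, Finset.mem_singleton] at hx
        rcases hx with rfl | rfl
        · exact h1B hxB
        · exact htB hxB
      · intro x hx
        rw [Finset.mem_singleton] at hx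
        exact Finset.mem_union_left _ (by simp [hx])
      · exact Finset.disjoint_singleton_right.mpr h1B
      · simpa using hBc
      · exact Finset.mem_union_right _ (by simp)
      · obtain ⟨x, hx⟩ := hBT
        rw [Finset.mem_inter] at hx
        exact ⟨x, Finset.mem_inter.mpr ⟨Finset.mem_union_left _ hx.1, hx.2⟩⟩

lemma diffFam_star_eq (n k : ℕ) (hk : 1 ≤ k) (hn : 2*k+1 ≤ n) :
    diffFam (fullStar1 n k)
      = ((Icc 1 n).erase 1).powerset.filter fun B => B.card < k := by
  ext B
  rw [mem_diffFam, mem_filter, mem_powerset]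
  constructor
  · rintro ⟨A, hA, A', hA', rfl⟩
    obtain ⟨⟨hAs, hAc⟩, h1A⟩ := mem_fullStar1.mp hA
    obtain ⟨⟨hA's, hA'c⟩, h1A'⟩ := mem_fullStar1.mp hA'
    constructor
    · intro x hx
      rw [Finset.mem_sdiff] at hx
      exact Finset.mem_erase.mpr ⟨fun h => hx.2 (h ▸ h1A'), hAs hx.1⟩
    · have hsub : A \ A' ⊆ A.erase 1 := fun x hx => Finset.mem_erase.mpr
        ⟨fun h => (Finset.mem_sdiff.mp hx).2 (h ▸ h1A'), (Finset.mem_sdiff.mp hx).1⟩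
      have := Finset.card_le_card hsub
      rw [Finset.card_erase_of_mem h1A, hAc] at this
      omega
  · rintro ⟨hBs, hBc⟩
    have h1B : 1 ∉ B := fun h => (Finset.mem_erase.mp (hBs h)).1 rfl
    have hBI : B ⊆ Icc 1 n := hBs.trans (Finset.erase_subset _ _)
    have h1I : 1 ∈ Icc 1 n := by simp [Finset.mem_Icc]; omega
    obtain ⟨C, hCsub, hCc⟩ := Finset.exists_subset_card_eq
      (n := k - 1) (s := Icc 1 n \ insert 1 B) (by
        have h1 : insert 1 B ⊆ Icc 1 n := Finset.insert_subset h1I hBI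
        have h2 : (insert 1 B).card ≤ B.card + 1 := Finset.card_insert_le _ _
        have := Finset.le_card_sdiff (insert 1 B) (Icc 1 n)
        rw [Nat.card_Icc] at this
        omega)
    have hCI : C ⊆ Icc 1 n := hCsub.trans Finset.sdiff_subset
    have h1C : 1 ∉ C := fun h => (Finset.mem_sdiff.mp (hCsub h)).2 (by simp)
    have hCB : Disjoint C B := Finset.disjoint_left.mpr
      fun x hx hxB => (Finset.mem_sdiff.mp (hCsub hx)).2 (by simp [hxB])
    obtain ⟨C', hC'C, hC'c⟩ := Finset.exists_subset_card_eq
      (n := k - 1 - B.card) (s := C) (by omega)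
    set A' : Finset ℕ := insert 1 C with hA'def
    set A : Finset ℕ := B ∪ insert 1 C' with hAdef
    have hA'mem : A' ∈ fullStar1 n k := by
      refine mem_fullStar1.mpr ⟨⟨Finset.insert_subset h1I hCI, ?_⟩, Finset.mem_insert_self _ _⟩
      rw [Finset.card_insert_of_notMem h1C, hCc]; omega
    have h1C' : 1 ∉ C' := fun h => h1C (hC'C h)
    have hdisj : Disjoint B (insert 1 C') := by
      rw [Finset.disjoint_left]
      intro x hxB hx
      rw [Finset.mem_insert] at hx
      rcases hx with rfl | hx
      · exact h1B hxB
      · exact Finset.disjoint_left.mp hCB (hC'C hx) hxB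
    have hAmem : A ∈ fullStar1 n k := by
      refine mem_fullStar1.mpr ⟨⟨Finset.union_subset hBI
        (Finset.insert_subset h1I ((hC'C.trans hCsub).trans Finset.sdiff_subset)), ?_⟩,
        Finset.mem_union_right _ (by simp)⟩
      rw [Finset.card_union_of_disjoint hdisj, Finset.card_insert_of_notMem h1C', hC'c]
      omega
    refine ⟨A, hAmem, A', hA'mem, ?_⟩
    rw [hAdef, hA'def, Finset.union_sdiff_distrib]
    have h2 : insert 1 C' \ insert 1 C = ∅ := Finset.sdiff_eq_empty_iff_subset.mpr
      (Finset.insert_subset_insert _ hC'C)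
    rw [h2, Finset.union_empty, Finset.sdiff_eq_self_of_disjoint]
    rw [Finset.disjoint_left]
    intro x hxB hx
    rw [Finset.mem_insert] at hx
    rcases hx with rfl | hx
    · exact h1B hxB
    · exact Finset.disjoint_left.mp hCB hx hxB

-- cardinalities of the ground sets
lemma card_aux (n k : ℕ) (hk : 10 ≤ k) (hn : 2*k+1 ≤ n) :
    ((Icc 1 n).powerset.filter (fun B =>
      (1 ∈ B ∧ B ∩ ({2,3,4} : Finset ℕ) = ∅ ∧ B.card < k) ∨
      (1 ∉ B ∧ B ∩ ({2,3,4} : Finset ℕ) = ∅ ∧ B.card + 1 < k) ∨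
      (1 ∉ B ∧ (B ∩ ({2,3,4} : Finset ℕ)).Nonempty ∧
        ¬ (({2,3,4} : Finset ℕ) ⊆ B) ∧ B.card < k))).card
    + (∑ ℓ ∈ range k, (n-4).choose ℓ) + (∑ ℓ ∈ range (k-3), (n-4).choose ℓ)
    = 2 * (∑ ℓ ∈ range (k-1), (n-4).choose ℓ) + ∑ ℓ ∈ range k, (n-1).choose ℓ := by
  classical
  have hn4 : 4 ≤ n := by omega
  have hTsub : ({2,3,4} : Finset ℕ) ⊆ Icc 1 n := by
    intro x hx; fin_cases hx <;> simp [Finset.mem_Icc] <;> omega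
  have h1I : 1 ∈ Icc 1 n := by simp [Finset.mem_Icc]; omega
  have h1T : 1 ∉ ({2,3,4} : Finset ℕ) := by decide
  -- split the filter into three
  set P1 : Finset ℕ → Prop := fun B => 1 ∈ B ∧ B ∩ ({2,3,4} : Finset ℕ) = ∅ ∧ B.card < k with hP1
  set P2 : Finset ℕ → Prop := fun B => 1 ∉ B ∧ B ∩ ({2,3,4} : Finset ℕ) = ∅ ∧ B.card + 1 < k with hP2
  set P3 : Finset ℕ → Prop := fun B => 1 ∉ B ∧ (B ∩ ({2,3,4} : Finset ℕ)).Nonempty ∧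
        ¬ (({2,3,4} : Finset ℕ) ⊆ B) ∧ B.card < k with hP3
  have hsplit : (Icc 1 n).powerset.filter (fun B => P1 B ∨ P2 B ∨ P3 B)
      = ((Icc 1 n).powerset.filter P1) ∪ ((Icc 1 n).powerset.filter P2)
        ∪ ((Icc 1 n).powerset.filter P3) := by
    ext B
    simp only [mem_filter, mem_union]
    tauto
  have hd12 : Disjoint ((Icc 1 n).powerset.filter P1) ((Icc 1 n).powerset.filter P2) := by
    rw [Finset.disjoint_left]
    intro B h1 h2
    rw [mem_filter] at h1 h2
    exact h2.2.1 h1.2.1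
  have hd123 : Disjoint (((Icc 1 n).powerset.filter P1) ∪ ((Icc 1 n).powerset.filter P2))
      ((Icc 1 n).powerset.filter P3) := by
    rw [Finset.disjoint_left]
    intro B h1 h3
    rw [Finset.mem_union, mem_filter, mem_filter] at h1
    rw [mem_filter] at h3
    obtain ⟨x, hx⟩ := h3.2.2.1
    rcases h1 with h | h
    · exact h3.2.1 h.2.1
    · rw [h.2.2.1] at hx; exact absurd hx (Finset.notMem_empty x)
  -- card F1
  have hF1 : ((Icc 1 n).powerset.filter P1).card = ∑ ℓ ∈ range (k-1), (n-4).choose ℓ := by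
    have he : (Icc 1 n).powerset.filter P1
        = (Icc 1 n \ ({2,3,4} : Finset ℕ)).powerset.filter
            (fun B => ({1} : Finset ℕ) ⊆ B ∧ B.card < (k-1) + ({1} : Finset ℕ).card) := by
      ext B
      simp only [mem_filter, mem_powerset, hP1, Finset.subset_sdiff,
        Finset.singleton_subset_iff, Finset.card_singleton,
        Finset.disjoint_iff_inter_eq_empty]
      constructor
      · rintro ⟨h1, h2, h3, h4⟩; exact ⟨⟨h1, h3⟩, h2, by omega⟩
      · rintro ⟨⟨h1, h3⟩, h2, h4⟩; exact ⟨h1, h2, h3, by omega⟩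
    rw [he, count_subset_card_lt _ _ (Finset.singleton_subset_iff.mpr
      (Finset.mem_sdiff.mpr ⟨h1I, h1T⟩)) (k-1), count_card_lt]
    have hcc : ((Icc 1 n \ ({2,3,4} : Finset ℕ)) \ ({1} : Finset ℕ)).card = n - 4 := by
      have h3c : ({2,3,4} : Finset ℕ).card = 3 := by decide
      rw [Finset.card_sdiff_of_subset (Finset.singleton_subset_iff.mpr
        (Finset.mem_sdiff.mpr ⟨h1I, h1T⟩)), Finset.card_sdiff_of_subset hTsub, Nat.card_Icc,
        h3c, Finset.card_singleton]
      omega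
    rw [hcc]
  -- card F2
  have hF2 : ((Icc 1 n).powerset.filter P2).card = ∑ ℓ ∈ range (k-1), (n-4).choose ℓ := by
    have he : (Icc 1 n).powerset.filter P2
        = (Icc 1 n \ ({1,2,3,4} : Finset ℕ)).powerset.filter (fun B => B.card < k - 1) := by
      ext B
      simp only [mem_filter, mem_powerset, hP2, Finset.subset_sdiff,
        Finset.disjoint_iff_inter_eq_empty]
      constructor
      · rintro ⟨h1, h2, h3, h4⟩
        refine ⟨⟨h1, ?_⟩, by omega⟩
        ext x
        simp only [Finset.mem_inter, Finset.notMem_empty, iff_false,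
          Finset.mem_insert, Finset.mem_singleton]
        rintro ⟨hxB, rfl | hx⟩
        · exact h2 hxB
        · have : x ∈ B ∩ ({2,3,4} : Finset ℕ) := Finset.mem_inter.mpr ⟨hxB, by
            simp only [Finset.mem_insert, Finset.mem_singleton]; exact hx⟩
          rw [h3] at this; exact Finset.notMem_empty x this
      · rintro ⟨⟨h1, h2⟩, h4⟩
        have hx : ∀ x ∈ B, x ∉ ({1,2,3,4} : Finset ℕ) := fun x hxB hx4 => by
          have : x ∈ B ∩ ({1,2,3,4} : Finset ℕ) := Finset.mem_inter.mpr ⟨hxB, hx4⟩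
          rw [h2] at this; exact Finset.notMem_empty x this
        refine ⟨h1, fun h => hx 1 h (by decide), ?_, by omega⟩
        ext x
        simp only [Finset.mem_inter, Finset.notMem_empty, iff_false]
        rintro ⟨hxB, hxT⟩
        refine hx x hxB ?_
        fin_cases hxT <;> decide
    rw [he, count_card_lt]
    have hcc : (Icc 1 n \ ({1,2,3,4} : Finset ℕ)).card = n - 4 := by
      have h4c : ({1,2,3,4} : Finset ℕ).card = 4 := by decide
      rw [Finset.card_sdiff_of_subset, Nat.card_Icc, h4c]
      · omega
      · intro x hx; fin_cases hx <;> simp [Finset.mem_Icc] <;> omega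
    rw [hcc]
  -- F3 equation
  have hF3 : ((Icc 1 n).powerset.filter P3).card
      + (∑ ℓ ∈ range k, (n-4).choose ℓ) + (∑ ℓ ∈ range (k-3), (n-4).choose ℓ)
      = ∑ ℓ ∈ range k, (n-1).choose ℓ := by
    set s1 := (Icc 1 n).erase 1 with hs1
    have hs1c : s1.card = n - 1 := by
      rw [hs1, Finset.card_erase_of_mem h1I, Nat.card_Icc]; omega
    have hTs1 : ({2,3,4} : Finset ℕ) ⊆ s1 := by
      intro x hx
      refine Finset.mem_erase.mpr ⟨?_, hTsub hx⟩
      fin_cases hx <;> norm_num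
    have hs1T : (s1 \ ({2,3,4} : Finset ℕ)).card = n - 4 := by
      have h3c : ({2,3,4} : Finset ℕ).card = 3 := by decide
      rw [Finset.card_sdiff_of_subset hTs1, hs1c, h3c]
      omega
    -- rewrite F3 over s1
    have he3 : (Icc 1 n).powerset.filter P3
        = s1.powerset.filter (fun B => (B ∩ ({2,3,4} : Finset ℕ)).Nonempty ∧
            ¬ (({2,3,4} : Finset ℕ) ⊆ B) ∧ B.card < k) := by
      ext B
      simp only [mem_filter, mem_powerset, hP3, hs1]
      constructor
      · rintro ⟨h1, h2, h3⟩
        exact ⟨fun x hx => Finset.mem_erase.mpr ⟨fun h => h2 (h ▸ hx), h1 hx⟩, h3⟩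
      · rintro ⟨h1, h3⟩
        exact ⟨fun x hx => (Finset.mem_erase.mp (h1 hx)).2,
          fun h => (Finset.mem_erase.mp (h1 h)).1 rfl, h3⟩
    have hsplit3 : s1.powerset.filter (fun B => B.card < k)
        = (s1.powerset.filter (fun B => B ∩ ({2,3,4} : Finset ℕ) = ∅ ∧ B.card < k))
          ∪ (s1.powerset.filter (fun B => (B ∩ ({2,3,4} : Finset ℕ)).Nonempty ∧
              ¬ (({2,3,4} : Finset ℕ) ⊆ B) ∧ B.card < k))
          ∪ (s1.powerset.filter (fun B => ({2,3,4} : Finset ℕ) ⊆ B ∧ B.card < k)) := by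
      ext B
      simp only [mem_filter, mem_union]
      constructor
      · rintro ⟨hB, hc⟩
        by_cases hsub : ({2,3,4} : Finset ℕ) ⊆ B
        · exact Or.inr ⟨hB, hsub, hc⟩
        · by_cases hne : (B ∩ ({2,3,4} : Finset ℕ)).Nonempty
          · exact Or.inl (Or.inr ⟨hB, hne, hsub, hc⟩)
          · rw [Finset.not_nonempty_iff_eq_empty] at hne
            exact Or.inl (Or.inl ⟨hB, hne, hc⟩)
      · rintro ((⟨hB, _, hc⟩ | ⟨hB, _, _, hc⟩) | ⟨hB, _, hc⟩) <;> exact ⟨hB, hc⟩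
    have hd1 : Disjoint (s1.powerset.filter (fun B => B ∩ ({2,3,4} : Finset ℕ) = ∅ ∧ B.card < k))
        (s1.powerset.filter (fun B => (B ∩ ({2,3,4} : Finset ℕ)).Nonempty ∧
              ¬ (({2,3,4} : Finset ℕ) ⊆ B) ∧ B.card < k)) := by
      rw [Finset.disjoint_left]
      intro B h1 h2
      rw [mem_filter] at h1 h2
      obtain ⟨x, hx⟩ := h2.2.1
      rw [h1.2.1] at hx
      exact Finset.notMem_empty x hx
    have hd2 : Disjoint ((s1.powerset.filter (fun B => B ∩ ({2,3,4} : Finset ℕ) = ∅ ∧ B.card < k))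
          ∪ (s1.powerset.filter (fun B => (B ∩ ({2,3,4} : Finset ℕ)).Nonempty ∧
              ¬ (({2,3,4} : Finset ℕ) ⊆ B) ∧ B.card < k)))
        (s1.powerset.filter (fun B => ({2,3,4} : Finset ℕ) ⊆ B ∧ B.card < k)) := by
      rw [Finset.disjoint_left]
      intro B h1 h2
      rw [Finset.mem_union, mem_filter, mem_filter] at h1
      rw [mem_filter] at h2
      rcases h1 with h | h
      · have : (2:ℕ) ∈ B ∩ ({2,3,4} : Finset ℕ) :=
          Finset.mem_inter.mpr ⟨h2.2.1 (by decide), by decide⟩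
        rw [h.2.1] at this
        exact Finset.notMem_empty 2 this
      · exact h.2.2.1 h2.2.1
    -- cards of the two side pieces
    have hG0 : (s1.powerset.filter (fun B => B ∩ ({2,3,4} : Finset ℕ) = ∅ ∧ B.card < k)).card
        = ∑ ℓ ∈ range k, (n-4).choose ℓ := by
      have he : s1.powerset.filter (fun B => B ∩ ({2,3,4} : Finset ℕ) = ∅ ∧ B.card < k)
          = (s1 \ ({2,3,4} : Finset ℕ)).powerset.filter (fun B => B.card < k) := by
        ext B
        simp only [mem_filter, mem_powerset, Finset.subset_sdiff,
          Finset.disjoint_iff_inter_eq_empty]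
        tauto
      rw [he, count_card_lt, hs1T]
    have hG2 : (s1.powerset.filter (fun B => ({2,3,4} : Finset ℕ) ⊆ B ∧ B.card < k)).card
        = ∑ ℓ ∈ range (k-3), (n-4).choose ℓ := by
      have he : s1.powerset.filter (fun B => ({2,3,4} : Finset ℕ) ⊆ B ∧ B.card < k)
          = s1.powerset.filter (fun B => ({2,3,4} : Finset ℕ) ⊆ B ∧
              B.card < (k-3) + ({2,3,4} : Finset ℕ).card) := by
        ext B
        have : ({2,3,4} : Finset ℕ).card = 3 := by decide
        simp only [mem_filter, this]
        constructor
        · rintro ⟨h1, h2, h3⟩; exact ⟨h1, h2, by omega⟩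
        · rintro ⟨h1, h2, h3⟩; exact ⟨h1, h2, by omega⟩
      rw [he, count_subset_card_lt _ _ hTs1, count_card_lt, hs1T]
    rw [he3]
    have := congrArg Finset.card hsplit3
    rw [Finset.card_union_of_disjoint hd2, Finset.card_union_of_disjoint hd1,
      count_card_lt, hG0, hG2, hs1c] at this
    omega
  rw [hsplit, Finset.card_union_of_disjoint hd123, Finset.card_union_of_disjoint hd12,
    hF1, hF2]
  omega

lemma choose_lt (n k : ℕ) (hk : 10 ≤ k) (hn : 2*k+1 ≤ n)
    (KI : (n-k-1)*(n-k-2) < (k-1)*(n-3)) :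
    (n-4).choose (k-1) < (n-3).choose (k-2) := by
  obtain ⟨j, rfl⟩ : ∃ j, k = j + 3 := ⟨k - 3, by omega⟩
  obtain ⟨M, hM⟩ : ∃ M, n = j + M + 7 := ⟨n - j - 7, by omega⟩
  subst hM
  have g1 : j + M + 7 - 4 = j + M + 3 := by omega
  have g2 : j + M + 7 - 3 = (j + M + 3) + 1 := by omega
  have g3 : j + 3 - 1 = j + 2 := by omega
  have g4 : j + 3 - 2 = j + 1 := by omega
  rw [g1, g2, g3, g4, Nat.choose_succ_succ]
  have KI' : (M+3)*(M+2) < (j+2)*(j+M+4) := by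
    have e1 : j + M + 7 - (j+3) - 1 = M + 3 := by omega
    have e2 : j + M + 7 - (j+3) - 2 = M + 2 := by omega
    have e3 : j + M + 7 - 3 = j + M + 4 := by omega
    rw [e1, e2, g3, e3] at KI
    exact KI
  set m := j + M + 3 with hm
  have h1 := Nat.choose_succ_right_eq m j
  have h2 := Nat.choose_succ_right_eq m (j+1)
  have hsub1 : m - j = M + 3 := by omega
  have hsub2 : m - (j+1) = M + 2 := by omega
  rw [hsub1] at h1
  rw [hsub2] at h2
  have ha : 0 < m.choose j := Nat.choose_pos (by omega)
  set a := m.choose j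
  set b := m.choose (j+1)
  set c := m.choose (j+2)
  have key : c * ((j+1)*(j+2)) < (a + b) * ((j+1)*(j+2)) := by
    have e : (a+b)*((j+1)*(j+2)) = a*((j+1)*(j+2)) + (b*(j+1))*(j+2) := by ring
    rw [h1] at e
    calc c * ((j+1)*(j+2)) = (c*(j+2))*(j+1) := by ring
      _ = (b*(M+2))*(j+1) := by rw [h2]
      _ = (b*(j+1))*(M+2) := by ring
      _ = (a*(M+3))*(M+2) := by rw [h1]
      _ = a*((M+3)*(M+2)) := by ring
      _ < a*((j+2)*(j+M+4)) := (Nat.mul_lt_mul_left ha).mpr KI'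
      _ = a*((j+1)*(j+2)) + (a*(M+3))*(j+2) := by ring
      _ = (a+b)*((j+1)*(j+2)) := by rw [e]
  exact lt_of_mul_lt_mul_right key (Nat.zero_le _)

theorem stmt8 (c : ℝ) (hc2 : 2 < c) (hc : c < (3 + Real.sqrt 5) / 2) :
    ∃ k0 : ℕ, ∀ k n : ℕ, k0 ≤ k → (n : ℝ) = c * k →
      (∑ ℓ ∈ Finset.range k, (n - 1).choose ℓ < (diffFam (famA3 n k)).card) ∧
      (diffFam (fullStar1 n k)).card = ∑ ℓ ∈ Finset.range k, (n - 1).choose ℓ ∧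
      ((diffFam (fullStar1 n k)).card : ℤ) - (diffFam (famA3 n k)).card =
        ((n - 4).choose (k - 1) : ℤ) - ((n - 3).choose (k - 2) : ℤ) ∧
      (((diffFam (fullStar1 n k)).card : ℤ) - (diffFam (famA3 n k)).card < 0 ↔
        (n : ℤ) ^ 2 - (3 * k + 2) * n + k ^ 2 + 6 * k - 1 < 0) := by
  have h5 : Real.sqrt 5 ^ 2 = 5 := Real.sq_sqrt (by norm_num)
  have h5n : (0:ℝ) ≤ Real.sqrt 5 := Real.sqrt_nonneg 5
  have hcq : c^2 - 3*c + 1 < 0 := by nlinarith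
  set d : ℝ := 3*c - 1 - c^2 with hd
  have hd0 : 0 < d := by rw [hd]; nlinarith
  refine ⟨max 10 (⌈2/d⌉₊ + 1), fun k n hk hn => ?_⟩
  -- numeric facts
  have hk10 : 10 ≤ k := le_trans (le_max_left _ _) hk
  have hkc : ⌈2/d⌉₊ + 1 ≤ k := le_trans (le_max_right _ _) hk
  have hkr : (10:ℝ) ≤ k := by exact_mod_cast hk10
  have hkd : 2 ≤ d * k := by
    have h1 : ((⌈2/d⌉₊ : ℕ) : ℝ) ≤ k := by exact_mod_cast Nat.le_of_succ_le hkc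
    have h2 : 2/d ≤ (k:ℝ) := le_trans (Nat.le_ceil _) h1
    rw [div_le_iff₀ hd0] at h2
    linarith [h2]
  have hnk : 2*k+1 ≤ n := by
    have h1 : (2*k:ℝ) < n := by rw [hn]; nlinarith
    have h2 : 2*k < n := by exact_mod_cast h1
    omega
  have hknn : (0:ℝ) ≤ k := by positivity
  have key1 : 2 * (k:ℝ) ≤ d * k * k := by nlinarith [mul_le_mul_of_nonneg_right hkd hknn]
  have key2 : (0:ℝ) ≤ (c - 2) * k := mul_nonneg (by linarith) hknn
  have KI : (n-k-1)*(n-k-2) < (k-1)*(n-3) := by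
    have KIr : ((n:ℝ)-k-1)*((n:ℝ)-k-2) < ((k:ℝ)-1)*((n:ℝ)-3) := by
      rw [hn]; nlinarith [key1, key2, hd]
    zify [show k ≤ n by omega, show 1 ≤ n - k by omega, show 2 ≤ n - k by omega,
      show 1 ≤ k by omega, show 3 ≤ n by omega]
    exact_mod_cast KIr
  have Q : (n : ℤ) ^ 2 - (3 * k + 2) * n + k ^ 2 + 6 * k - 1 < 0 := by
    have Qr : ((n:ℝ))^2 - (3*k+2)*n + k^2 + 6*k - 1 < 0 := by
      rw [hn]; nlinarith [key1, key2, hd]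
    exact_mod_cast Qr
  -- combinatorial cardinalities
  have h1I : 1 ∈ Icc 1 n := by simp [Finset.mem_Icc]; omega
  have hstarcard : (diffFam (fullStar1 n k)).card = ∑ ℓ ∈ range k, (n-1).choose ℓ := by
    rw [diffFam_star_eq n k (by omega) hnk, count_card_lt]
    have hcc : ((Icc 1 n).erase 1).card = n - 1 := by
      rw [Finset.card_erase_of_mem h1I, Nat.card_Icc]
      omega
    rw [hcc]
  have hcards := card_aux n k hk10 hnk
  rw [← diffFam_famA3_eq n k hk10 hnk] at hcards
  have hZ : ((diffFam (fullStar1 n k)).card : ℤ) - (diffFam (famA3 n k)).card =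
      ((n - 4).choose (k - 1) : ℤ) - ((n - 3).choose (k - 2) : ℤ) := by
    have hc' := congrArg (Nat.cast : ℕ → ℤ) hcards
    push_cast at hc'
    have hs' := congrArg (Nat.cast : ℕ → ℤ) hstarcard
    push_cast at hs'
    obtain ⟨j, hj⟩ : ∃ j, k = j + 3 := ⟨k-3, by omega⟩
    subst hj
    have g3 : j + 3 - 1 = j + 2 := by omega
    have g4 : j + 3 - 2 = j + 1 := by omega
    have g5 : j + 3 - 3 = j := by omega
    have g6 : n - 3 = (n-4) + 1 := by omega
    rw [g3, g4, g6, Nat.choose_succ_succ]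
    rw [g3, g5] at hc'
    simp only [Finset.sum_range_succ] at hc' hs' ⊢
    push_cast at hc' hs' ⊢
    linarith [hc', hs']
  have hlt : ((n - 4).choose (k - 1) : ℤ) < ((n - 3).choose (k - 2) : ℤ) := by
    exact_mod_cast choose_lt n k hk10 hnk KI
  refine ⟨?_, hstarcard, hZ, iff_of_true (by rw [hZ]; linarith) Q⟩
  have h1 : ((∑ ℓ ∈ range k, (n-1).choose ℓ : ℕ) : ℤ) < ((diffFam (famA3 n k)).card : ℤ) := by
    have := hstarcard
    have hs' := congrArg (Nat.cast : ℕ → ℤ) hstarcard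
    linarith [hZ, hs', hlt]
  exact_mod_cast h1
end

section
/- Let n ≥ 50k ln k, k ≥ 50, and set r = ln k. Then for any family G ⊆ binom([2,n], n-k-1) with |G| = C(x, n-k-1) where x ≤ n - r (generalized binomial), one has |G| / |∂^{k-1} G| ≤ C(x, n-k-1)/C(x, k-1) < k^{-2}. -/
/-!
The first inequality is Lovász's form of the Kruskal–Katona theorem: if an `r`-uniform family `𝒜`
has `|𝒜| ≥ C(x, r)` for a real `x ≥ r - 1`, then `|∂ 𝒜| ≥ C(x, r - 1)`; iterating it down to level
`k - 1` bounds `|∂^{k-1} G|` from below by `C(x, k - 1)`. It is proved by induction on `r` and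
`|𝒜|`. By Kruskal–Katona we may replace `𝒜` by a colex initial segment on `Fin N`, and split it
according to the least element `0` into `𝒜₁ = {s \ {0} : 0 ∈ s ∈ 𝒜}` and `𝒜₀ = {s ∈ 𝒜 : 0 ∉ s}`. Then
`|∂ 𝒜| ≥ |𝒜₁| + |∂ 𝒜₁|`, and `∂ 𝒜₀ ⊆ 𝒜₁` because `𝒜` is an initial segment, so with Pascal's rule
`C(x, r) = C(x - 1, r) + C(x - 1, r - 1)` either `𝒜₁` is large enough for the induction hypothesis,
or `𝒜₀` is, and then `|𝒜₁| ≥ |∂ 𝒜₀|` is too large after all.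

For the second inequality, `C(x, n - k - 1) / C(x, k - 1)` is a product of `n - 2k` factors; after
reversing the order of the numerators the factor of index `t` is `1 + (x - n + 2) / (k + t)`, which
is at most `exp (-(log k - 2) / (k + t))`, and `∑ 1 / (k + t) ≥ log ((n - k) / k)` is large enough.
-/

open Finset

def levShadow (j : ℕ) (G : Finset (Finset ℕ)) : Finset (Finset ℕ) :=
  G.biUnion fun A => A.powersetCard j

noncomputable def genChoose (x : ℝ) (k : ℕ) : ℝ :=
  (∏ i ∈ Finset.range k, (x - i)) / (Nat.factorial k)

open Real
open scoped FinsetFamily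

section genChoose

lemma genChoose_eq_choose (x : ℝ) (k : ℕ) : genChoose x k = Ring.choose x k := by
  rw [Ring.choose_eq_smul, smul_eq_mul, genChoose, inv_mul_eq_div,
    ← Polynomial.eval₂_smulOneHom_eq_smeval, ← descPochhammer_eval_eq_prod_range,
    ← descPochhammer_map (Int.castRingHom ℝ), Polynomial.eval_map, RingHom.ext_int
      (Int.castRingHom ℝ) RingHom.smulOneHom]

@[simp] lemma genChoose_zero (x : ℝ) : genChoose x 0 = 1 := by simp [genChoose]

lemma genChoose_succ (x : ℝ) (k : ℕ) :
    genChoose x (k + 1) = genChoose x k * ((x - k) / (k + 1)) := by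
  rw [genChoose, genChoose, prod_range_succ, Nat.factorial_succ, div_mul_div_comm]
  push_cast
  ring

lemma genChoose_add_one_add_one (x : ℝ) (k : ℕ) :
    genChoose (x + 1) (k + 1) = genChoose x k + genChoose x (k + 1) := by
  simp only [genChoose_eq_choose, Ring.choose_succ_succ]

lemma genChoose_natCast (n k : ℕ) : genChoose n k = n.choose k := by
  rw [genChoose_eq_choose, Ring.choose_natCast]

lemma genChoose_nonneg {x : ℝ} : ∀ {k : ℕ}, (k : ℝ) - 1 ≤ x → 0 ≤ genChoose x k
  | 0, _ => by simp
  | k + 1, hx => by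
    push_cast at hx
    rw [genChoose_succ]
    exact mul_nonneg (genChoose_nonneg (by linarith)) (div_nonneg (by linarith) (by positivity))

lemma genChoose_pos {x : ℝ} : ∀ {k : ℕ}, (k : ℝ) - 1 < x → 0 < genChoose x k
  | 0, _ => by simp
  | k + 1, hx => by
    push_cast at hx
    rw [genChoose_succ]
    exact mul_pos (genChoose_pos (by linarith)) (div_pos (by linarith) (by positivity))

lemma genChoose_mono {x y : ℝ} (hxy : x ≤ y) : ∀ {k : ℕ}, (k : ℝ) - 1 ≤ x →
    genChoose x k ≤ genChoose y k
  | 0, _ => by simp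
  | k + 1, hx => by
    push_cast at hx
    rw [genChoose_succ, genChoose_succ]
    exact mul_le_mul (genChoose_mono hxy (by linarith)) (by gcongr)
      (div_nonneg (by linarith) (by positivity)) (genChoose_nonneg (by linarith))

lemma genChoose_add (x : ℝ) (j : ℕ) : ∀ M : ℕ,
    genChoose x (j + M) = genChoose x j * ∏ t ∈ range M, (x - (j + t)) / (j + t + 1)
  | 0 => by simp
  | M + 1 => by
    rw [← add_assoc, genChoose_succ, genChoose_add x j M, prod_range_succ]
    push_cast
    ring

end genChoose

lemma log_add_sub_log_le_sum_inv {a : ℝ} (ha : 0 < a) (M : ℕ) :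
    log (a + M) - log a ≤ ∑ t ∈ range M, 1 / (a + t) := by
  have hstep (t : ℕ) : log (a + (t + 1 : ℕ)) - log (a + t) ≤ 1 / (a + t) := by
    have hpos : 0 < a + t := by positivity
    rw [← log_div (by positivity) hpos.ne']
    calc log ((a + (t + 1 : ℕ)) / (a + t)) ≤ (a + (t + 1 : ℕ)) / (a + t) - 1 :=
          log_le_sub_one_of_pos (by positivity)
      _ = 1 / (a + t) := by field_simp; push_cast; ring
  calc log (a + M) - log a = ∑ t ∈ range M, (log (a + (t + 1 : ℕ)) - log (a + t)) := by
        rw [sum_range_sub (fun t : ℕ => log (a + t))]; simp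
    _ ≤ _ := sum_le_sum fun t _ => hstep t

/-- Pairing the `t`-th factor of the numerator with the `(M - 1 - t)`-th one of the denominator,
every factor of the ratio is `1 + c / (j + 1 + t)` with `c = x - 2j - M`. -/
lemma genChoose_add_div_le_exp (x : ℝ) (j M : ℕ) (hx : (j : ℝ) + M - 1 ≤ x) :
    genChoose x (j + M) / genChoose x j ≤
      exp ((x - 2 * j - M) * ∑ t ∈ range M, 1 / ((j : ℝ) + 1 + t)) := by
  rcases M.eq_zero_or_pos with rfl | hM
  · simpa using div_self_le_one (genChoose x j)
  have hM1 : (1 : ℝ) ≤ M := by exact_mod_cast hM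
  rw [genChoose_add, mul_div_cancel_left₀ _ (genChoose_pos (by linarith)).ne', prod_div_distrib,
    ← prod_range_reflect (fun t => x - (j + t)), ← prod_div_distrib, mul_sum, exp_sum]
  refine prod_le_prod (fun t ht => ?_) (fun t ht => ?_)
  all_goals
    have ht : t + 1 ≤ M := mem_range.1 ht
    have hcast : ((M - 1 - t : ℕ) : ℝ) = M - 1 - t := by
      rw [Nat.cast_sub (by omega), Nat.cast_sub (by omega)]; simp
    rw [hcast]
  · exact div_nonneg (by linarith [(by exact_mod_cast ht : (t : ℝ) + 1 ≤ M)]) (by positivity)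
  · calc (x - (j + (M - 1 - t))) / (j + t + 1) = (x - 2 * j - M) * (1 / (j + 1 + t)) + 1 := by
          field_simp; ring
      _ ≤ _ := add_one_le_exp _

lemma five_mul_log_two_le_log {k : ℕ} (hk : 50 ≤ k) : 5 * log 2 ≤ log k := by
  calc 5 * log 2 = log (2 ^ 5) := by rw [log_pow]; norm_num
    _ ≤ log k := log_le_log (by norm_num) (by norm_num; exact_mod_cast (by omega : 32 ≤ k))

lemma two_mul_le_of_le_mul_log {n k : ℕ} (hk : 50 ≤ k) (hn : 50 * k * log k ≤ n) : 2 * k ≤ n := by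
  have := five_mul_log_two_le_log hk
  have := log_two_gt_d9
  have : ((2 * k : ℕ) : ℝ) ≤ n := by push_cast; nlinarith
  exact_mod_cast this

lemma two_mul_log_lt {n k : ℕ} (hk : 50 ≤ k) (hn : 50 * k * log k ≤ n) :
    2 * log k < (log k - 2) * (log (n - k) - log k) := by
  have hlog2 := log_two_gt_d9
  have hr := five_mul_log_two_le_log hk
  have hkpos : (0 : ℝ) < k := by positivity
  have hL : 7 * log 2 ≤ log (n - k) - log k := by
    calc 7 * log 2 = log (2 ^ 7) := by rw [log_pow]; norm_num
      _ ≤ log ((n - k) / k) := log_le_log (by norm_num) ((le_div_iff₀ hkpos).2 (by nlinarith))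
      _ = log (n - k) - log k := log_div (by nlinarith) hkpos.ne'
  nlinarith

lemma genChoose_div_genChoose_lt {n k : ℕ} (hk : 50 ≤ k) (hn : 50 * k * log k ≤ n) {x : ℝ}
    (hx1 : (n : ℝ) - k - 1 ≤ x) (hx2 : x ≤ n - log k) :
    genChoose x (n - k - 1) / genChoose x (k - 1) < 1 / (k : ℝ) ^ 2 := by
  have hkpos : (0 : ℝ) < k := by positivity
  have h2k := two_mul_le_of_le_mul_log hk hn
  have hk1 : ((k - 1 : ℕ) : ℝ) = k - 1 := by rw [Nat.cast_sub (by omega)]; simp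
  have hM : ((n - 2 * k : ℕ) : ℝ) = n - 2 * k := by rw [Nat.cast_sub h2k]; simp
  set S := ∑ t ∈ range (n - 2 * k), 1 / ((k : ℝ) + t)
  have hS : log (n - k) - log k ≤ S := by
    have := log_add_sub_log_le_sum_inv hkpos (n - 2 * k)
    rwa [hM, show (k : ℝ) + (n - 2 * k) = n - k by ring] at this
  have hratio : genChoose x (n - k - 1) / genChoose x (k - 1) ≤ exp ((x - n + 2) * S) := by
    have := genChoose_add_div_le_exp x (k - 1) (n - 2 * k) (by rw [hk1, hM]; linarith)
    rwa [show k - 1 + (n - 2 * k) = n - k - 1 by omega, hk1, hM, sub_add_cancel,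
      show x - 2 * (k - 1 : ℝ) - (n - 2 * k) = x - n + 2 by ring] at this
  have hL := two_mul_log_lt hk hn
  have hr : 2 < log k := by linarith [five_mul_log_two_le_log hk, log_two_gt_d9]
  have hS0 : 0 ≤ S := by nlinarith
  calc genChoose x (n - k - 1) / genChoose x (k - 1) ≤ exp ((x - n + 2) * S) := hratio
    _ < exp (-(2 * log k)) := by
        rw [exp_lt_exp]
        nlinarith [mul_le_mul_of_nonneg_right (show x - n + 2 ≤ 2 - log k by linarith) hS0,
          mul_le_mul_of_nonpos_left hS (show 2 - log k ≤ 0 by linarith)]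
    _ = 1 / (k : ℝ) ^ 2 := by
        rw [exp_neg, show 2 * log k = log ((k : ℝ) ^ 2) by rw [log_pow]; norm_num,
          exp_log (by positivity), one_div]

section Shadow

variable {α : Type*} [DecidableEq α]

lemma card_le_card_shadow {𝒜 : Finset (Finset α)} {s : Finset α} (hs : s ∈ 𝒜) :
    #s ≤ #(∂ 𝒜) := by
  rw [← card_image_of_injOn (erase_injOn s)]
  exact card_le_card fun t ht => by
    obtain ⟨a, ha, rfl⟩ := mem_image.1 ht
    exact erase_mem_shadow hs ha

lemma card_memberSubfamily_add_card_shadow_le (a : α) (𝒜 : Finset (Finset α)) :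
    #(𝒜.memberSubfamily a) + #(∂ (𝒜.memberSubfamily a)) ≤ #(∂ 𝒜) := by
  set ℬ := 𝒜.memberSubfamily a
  have hℬ : ℬ ⊆ ∂ 𝒜 := fun s hs => by
    obtain ⟨hs, has⟩ := mem_memberSubfamily.1 hs
    simpa [has] using erase_mem_shadow hs (mem_insert_self a s)
  have hnot : ∀ t ∈ ∂ ℬ, a ∉ t := fun t ht hat => by
    obtain ⟨s, hs, hts⟩ := exists_subset_of_mem_shadow ht
    exact (mem_memberSubfamily.1 hs).2 (hts hat)
  have hinsert : (∂ ℬ).image (insert a) ⊆ ∂ 𝒜 := fun u hu => by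
    obtain ⟨t, ht, rfl⟩ := mem_image.1 hu
    obtain ⟨b, hbt, hb⟩ := mem_shadow_iff_insert_mem.1 ht
    obtain ⟨hb, hab⟩ := mem_memberSubfamily.1 hb
    refine mem_shadow_iff_insert_mem.2 ⟨b, ?_, by rwa [insert_comm]⟩
    simp only [mem_insert, not_or] at hab ⊢
    exact ⟨Ne.symm hab.1, hbt⟩
  have hdisj : Disjoint ℬ ((∂ ℬ).image (insert a)) := disjoint_left.2 fun s hs hs' => by
    obtain ⟨t, -, rfl⟩ := mem_image.1 hs'
    exact (mem_memberSubfamily.1 hs).2 (mem_insert_self a t)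
  calc #ℬ + #(∂ ℬ) = #(ℬ ∪ (∂ ℬ).image (insert a)) := by
        rw [card_union_of_disjoint hdisj,
          card_image_of_injOn fun t ht u hu h => by
            rw [← erase_insert (hnot t ht), ← erase_insert (hnot u hu)]
            exact congrArg (erase · a) h]
    _ ≤ #(∂ 𝒜) := card_le_card (union_subset hℬ hinsert)

lemma shadow_map {β : Type*} [DecidableEq β] (f : α ↪ β) (𝒜 : Finset (Finset α)) :
    ∂ (𝒜.map (mapEmbedding f).toEmbedding) = (∂ 𝒜).map (mapEmbedding f).toEmbedding := by
  ext t
  simp only [mem_shadow_iff, mem_map, RelEmbedding.coe_toEmbedding, mapEmbedding_apply]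
  constructor
  · rintro ⟨_, ⟨s, hs, rfl⟩, b, hb, rfl⟩
    obtain ⟨a, ha, rfl⟩ := mem_map.1 hb
    exact ⟨s.erase a, ⟨s, hs, a, ha, rfl⟩, map_erase f s a⟩
  · rintro ⟨_, ⟨s, hs, a, ha, rfl⟩, rfl⟩
    exact ⟨s.map f, ⟨s, hs, rfl⟩, f a, mem_map_of_mem f ha, (map_erase f s a).symm⟩

lemma exists_eq_map_fin (𝒜 : Finset (Finset α)) :
    ∃ (N : ℕ) (f : Fin N ↪ α) (ℬ : Finset (Finset (Fin N))),
      𝒜 = ℬ.map (mapEmbedding f).toEmbedding := by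
  set U := 𝒜.sup id
  let f : Fin #U ↪ α := U.equivFin.symm.toEmbedding.trans (Function.Embedding.subtype _)
  have hU : ∀ a ∈ U, ∃ i, f i = a := fun a ha => ⟨U.equivFin ⟨a, ha⟩, by simp [f]⟩
  have h𝒜 : 𝒜 ⊆ (univ : Finset (Finset (Fin #U))).map (mapEmbedding f).toEmbedding := by
    intro s hs
    obtain ⟨u, -, rfl⟩ := subset_map_iff.1 fun a ha =>
      mem_map.2 <| (hU a (mem_sup.2 ⟨s, hs, ha⟩)).imp fun i hi => ⟨mem_univ i, hi⟩
    exact mem_map_of_mem _ (mem_univ u)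
  obtain ⟨ℬ, -, h⟩ := subset_map_iff.1 h𝒜
  exact ⟨#U, f, ℬ, h⟩

lemma Set.Sized.memberSubfamily {𝒜 : Finset (Finset α)} {r : ℕ}
    (h𝒜 : (𝒜 : Set (Finset α)).Sized (r + 1)) (a : α) :
    (𝒜.memberSubfamily a : Set (Finset α)).Sized r := fun s hs => by
  obtain ⟨hs, has⟩ := mem_memberSubfamily.1 hs
  simpa [card_insert_of_notMem has] using h𝒜 hs

lemma Set.Sized.nonMemberSubfamily {𝒜 : Finset (Finset α)} {r : ℕ}
    (h𝒜 : (𝒜 : Set (Finset α)).Sized r) (a : α) :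
    (𝒜.nonMemberSubfamily a : Set (Finset α)).Sized r :=
  Set.Sized.mono (fun _ hs => (mem_nonMemberSubfamily.1 hs).1) h𝒜

lemma Set.Sized.shadow_iterate_nonempty {𝒜 : Finset (Finset α)} {r i : ℕ}
    (h𝒜 : (𝒜 : Set (Finset α)).Sized r) (hne : 𝒜.Nonempty) (hi : i ≤ r) : (∂^[i] 𝒜).Nonempty := by
  obtain ⟨s, hs⟩ := hne
  obtain ⟨t, hts, ht⟩ := Finset.exists_subset_card_eq (show r - i ≤ #s by rw [h𝒜 hs]; omega)
  refine ⟨t, mem_shadow_iterate_iff_exists_sdiff.2 ⟨s, hs, hts, ?_⟩⟩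
  rw [card_sdiff_of_subset hts, h𝒜 hs, ht]
  omega

lemma genChoose_le_card_shadow_of_le {𝒜 : Finset (Finset α)} {r : ℕ} {x : ℝ}
    (h𝒜 : (𝒜 : Set (Finset α)).Sized (r + 1)) (hne : 𝒜.Nonempty) (hx : (r : ℝ) ≤ x)
    (hxr : x ≤ r + 1) : genChoose x r ≤ #(∂ 𝒜) := by
  obtain ⟨s, hs⟩ := hne
  calc genChoose x r ≤ genChoose ((r + 1 : ℕ) : ℝ) r :=
        genChoose_mono (by push_cast; linarith) (by linarith)
    _ = #s := by rw [genChoose_natCast, Nat.choose_succ_self_right, h𝒜 hs]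
    _ ≤ #(∂ 𝒜) := by exact_mod_cast card_le_card_shadow hs

end Shadow

lemma exists_subset_card_eq_forall_lt_mem {ι β : Type*} [DecidableEq ι] [LinearOrder β]
    (f : ι → β) (S : Finset ι) : ∀ {m : ℕ}, m ≤ #S →
      ∃ T ⊆ S, #T = m ∧ ∀ a ∈ T, ∀ b ∈ S, f b < f a → b ∈ T := by
  induction S using induction_on_max_value f with
  | empty => intro m hm; exact ⟨∅, by simp_all⟩
  | insert a S haS hmax ih =>
    intro m hm
    rw [card_insert_of_notMem haS] at hm
    rcases hm.lt_or_eq with hm | rfl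
    · obtain ⟨T, hTS, rfl, hT⟩ := ih (Nat.le_of_lt_succ hm)
      refine ⟨T, hTS.trans (subset_insert a S), rfl, fun c hc b hb hbc => ?_⟩
      rcases mem_insert.1 hb with rfl | hb
      · exact absurd (hmax c (hTS hc)) (not_le.2 hbc)
      · exact hT c hc b hb hbc
    · exact ⟨insert a S, Subset.rfl, card_insert_of_notMem haS, fun _ _ b hb _ => hb⟩

namespace Finset.Colex

variable {α : Type*} [LinearOrder α] {𝒜 : Finset (Finset α)} {r : ℕ}

lemma exists_isInitSeg_card_eq [Fintype α] (h𝒜 : (𝒜 : Set (Finset α)).Sized r) :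
    ∃ 𝒞 : Finset (Finset α), IsInitSeg 𝒞 r ∧ #𝒞 = #𝒜 := by
  obtain ⟨𝒞, h𝒞, hcard, hlow⟩ := exists_subset_card_eq_forall_lt_mem toColex
    (univ.powersetCard r) (card_le_card fun s hs => mem_powersetCard_univ.2 (h𝒜 hs))
  refine ⟨𝒞, ⟨fun s hs => mem_powersetCard_univ.1 (h𝒞 hs), fun s t hs ⟨hts, ht⟩ => ?_⟩, hcard⟩
  exact hlow s hs t (mem_powersetCard_univ.2 ht) hts

variable [DecidableEq α]

lemma IsInitSeg.shadow_nonMemberSubfamily_subset {a : α} (h𝒜 : IsInitSeg 𝒜 r) (ha : IsBot a) :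
    ∂ (𝒜.nonMemberSubfamily a) ⊆ 𝒜.memberSubfamily a := by
  intro t ht
  obtain ⟨s, hs, b, hb, rfl⟩ := mem_shadow_iff.1 ht
  obtain ⟨hs, has⟩ := mem_nonMemberSubfamily.1 hs
  have hab : a < b := (ha b).lt_of_ne (ne_of_mem_of_not_mem hb has).symm
  have hat : a ∉ s.erase b := fun h => has (mem_of_mem_erase h)
  refine mem_memberSubfamily.2 ⟨h𝒜.2 hs ⟨?_, ?_⟩, hat⟩
  · simpa [insert_erase hb] using (insert_lt_insert hat (notMem_erase b s)).2 hab
  · rw [card_insert_of_notMem hat, card_erase_add_one hb, h𝒜.1 hs]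

end Finset.Colex

theorem genChoose_le_card_shadow_of_fin {N : ℕ} (r : ℕ) :
    ∀ {𝒜 : Finset (Finset (Fin N))} {x : ℝ}, (𝒜 : Set (Finset (Fin N))).Sized (r + 1) →
      𝒜.Nonempty → (r : ℝ) ≤ x → genChoose x (r + 1) ≤ #𝒜 → genChoose x r ≤ #(∂ 𝒜) := by
  induction r with
  | zero =>
    rintro 𝒜 x h𝒜 ⟨s, hs⟩ - -
    have hs₁ := card_le_card_shadow hs
    rw [h𝒜 hs] at hs₁
    simpa using (Nat.one_le_cast (α := ℝ)).2 hs₁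
  | succ r ih =>
    intro 𝒜 x h𝒜 hne hx hcard
    induction hm : #𝒜 using Nat.strong_induction_on generalizing 𝒜 x with
    | _ m ihm =>
    push_cast at hx
    rcases le_or_gt x (r + 2) with hxr | hxr
    · exact genChoose_le_card_shadow_of_le h𝒜 hne (by push_cast; linarith) (by push_cast; linarith)
    obtain ⟨s, hs⟩ := hne
    obtain ⟨𝒞, h𝒞, h𝒞card⟩ := Colex.exists_isInitSeg_card_eq h𝒜
    refine le_trans ?_ (Nat.cast_le.2 (kruskal_katona h𝒜 h𝒞card.le h𝒞))
    obtain ⟨b, -⟩ := card_pos.1 ((h𝒜 hs).trans_gt (Nat.succ_pos _))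
    obtain ⟨a, ha⟩ : ∃ a : Fin N, IsBot a := ⟨⟨0, b.pos⟩, fun c => Nat.zero_le c⟩
    set 𝒞₁ := 𝒞.memberSubfamily a
    set 𝒞₀ := 𝒞.nonMemberSubfamily a
    have hsplit : #𝒞₁ + #𝒞₀ = m := by
      rw [← hm, ← h𝒞card]; exact card_memberSubfamily_add_card_nonMemberSubfamily a 𝒞
    have hsplit' : (#𝒞₁ : ℝ) + #𝒞₀ = #𝒜 := by rw [hm]; exact_mod_cast hsplit
    have hpascal := genChoose_add_one_add_one (x - 1)
    rw [sub_add_cancel] at hpascal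
    rcases le_or_gt (genChoose (x - 1) (r + 1)) #𝒞₁ with h₁ | h₁
    · have h𝒞₁ : 𝒞₁.Nonempty := card_pos.1 <| Nat.cast_pos.1 <|
        (genChoose_pos (by push_cast; linarith)).trans_le h₁
      have hshadow₁ := ih (h𝒞.1.memberSubfamily a) h𝒞₁ (by linarith) h₁
      have hsum : ((#𝒞₁ + #(∂ 𝒞₁) : ℕ) : ℝ) ≤ #(∂ 𝒞) :=
        Nat.cast_le.2 (card_memberSubfamily_add_card_shadow_le a 𝒞)
      push_cast at hsum
      linarith [hpascal r]
    -- otherwise `𝒞₀` would be a smaller counterexample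
    have h₀ : genChoose (x - 1) (r + 2) < #𝒞₀ := by linarith [hpascal (r + 1)]
    obtain ⟨t, ht⟩ : 𝒞₀.Nonempty := card_pos.1 <| Nat.cast_pos.1 <|
      (genChoose_nonneg (by push_cast; linarith)).trans_lt h₀
    have hsub := h𝒞.shadow_nonMemberSubfamily_subset ha
    have h𝒞₁ : 0 < #𝒞₁ :=
      calc 0 < r + 2 := by omega
        _ = #t := (h𝒞.1.nonMemberSubfamily a ht).symm
        _ ≤ #(∂ 𝒞₀) := card_le_card_shadow ht
        _ ≤ #𝒞₁ := card_le_card hsub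
    have hlt : #𝒞₀ < m := by omega
    have hshadow₀ :=
      ihm _ hlt (h𝒞.1.nonMemberSubfamily a) ⟨t, ht⟩ (by push_cast; linarith) h₀.le rfl
    have : (#(∂ 𝒞₀) : ℝ) ≤ #𝒞₁ := Nat.cast_le.2 (card_le_card hsub)
    linarith

section KruskalKatona

variable {α : Type*} [DecidableEq α] {𝒜 : Finset (Finset α)} {r : ℕ} {x : ℝ}

theorem genChoose_le_card_shadow (h𝒜 : (𝒜 : Set (Finset α)).Sized (r + 1)) (hne : 𝒜.Nonempty)
    (hx : (r : ℝ) ≤ x) (hcard : genChoose x (r + 1) ≤ #𝒜) : genChoose x r ≤ #(∂ 𝒜) := by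
  obtain ⟨N, f, ℬ, rfl⟩ := exists_eq_map_fin 𝒜
  rw [shadow_map, card_map]
  rw [card_map] at hcard
  exact genChoose_le_card_shadow_of_fin r (fun s hs => by simpa using h𝒜 (mem_map_of_mem _ hs))
    (map_nonempty.1 hne) hx hcard

theorem genChoose_sub_le_card_shadow_iterate (h𝒜 : (𝒜 : Set (Finset α)).Sized r)
    (hne : 𝒜.Nonempty) (hx : (r : ℝ) - 1 ≤ x) (hcard : genChoose x r ≤ #𝒜) :
    ∀ {i : ℕ}, i ≤ r → genChoose x (r - i) ≤ #(∂^[i] 𝒜)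
  | 0, _ => by simpa using hcard
  | i + 1, hi => by
    have hsized : (∂^[i] 𝒜 : Set (Finset α)).Sized (r - (i + 1) + 1) := by
      convert h𝒜.shadow_iterate using 1; omega
    have hx' : ((r - (i + 1) : ℕ) : ℝ) ≤ x := by
      rw [Nat.cast_sub hi]; push_cast; linarith
    rw [Function.iterate_succ_apply']
    refine genChoose_le_card_shadow hsized (h𝒜.shadow_iterate_nonempty hne (by omega)) hx' ?_
    rw [show r - (i + 1) + 1 = r - i by omega]
    exact genChoose_sub_le_card_shadow_iterate h𝒜 hne hx hcard (by omega)

end KruskalKatona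

lemma levShadow_eq_shadow_iterate {G : Finset (Finset ℕ)} {r j : ℕ}
    (hG : (G : Set (Finset ℕ)).Sized r) (hj : j ≤ r) : levShadow j G = ∂^[r - j] G := by
  ext t
  simp only [levShadow, mem_biUnion, mem_powersetCard, mem_shadow_iterate_iff_exists_sdiff]
  refine exists_congr fun s => and_congr_right fun hs => and_congr_right fun hts => ?_
  have := card_le_card hts
  rw [card_sdiff_of_subset hts, hG hs]
  rw [hG hs] at this
  omega

theorem stmt14 (n k : ℕ) (hk : 50 ≤ k) (hn : 50 * k * Real.log k ≤ (n : ℝ))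
    (G : Finset (Finset ℕ)) (hG : G ⊆ (Finset.Icc 2 n).powersetCard (n - k - 1))
    (hne : G.Nonempty)
    (x : ℝ) (hx1 : ((n : ℝ) - k - 1) ≤ x) (hx2 : x ≤ (n : ℝ) - Real.log k)
    (hcard : (G.card : ℝ) = genChoose x (n - k - 1)) :
    (G.card : ℝ) / ((levShadow (k - 1) G).card : ℝ) ≤
        genChoose x (n - k - 1) / genChoose x (k - 1) ∧
      genChoose x (n - k - 1) / genChoose x (k - 1) < 1 / (k : ℝ) ^ 2 := by
  have h2k := two_mul_le_of_le_mul_log hk hn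
  have h2k' : (2 * k : ℝ) ≤ n := by exact_mod_cast h2k
  have hsized : (G : Set (Finset ℕ)).Sized (n - k - 1) := fun A hA => (mem_powersetCard.1 (hG hA)).2
  have hm : ((n - k - 1 : ℕ) : ℝ) = n - k - 1 := by
    rw [Nat.sub_sub, Nat.cast_sub (by omega)]; push_cast; ring
  have hk1 : ((k - 1 : ℕ) : ℝ) = k - 1 := by rw [Nat.cast_sub (by omega)]; simp
  have hshadow : genChoose x (k - 1) ≤ #(levShadow (k - 1) G) := by
    rw [levShadow_eq_shadow_iterate hsized (by omega)]
    have := genChoose_sub_le_card_shadow_iterate hsized hne (by linarith) hcard.ge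
      (Nat.sub_le (n - k - 1) (k - 1))
    rwa [Nat.sub_sub_self (by omega)] at this
  refine ⟨?_, genChoose_div_genChoose_lt hk hn hx1 hx2⟩
  rw [hcard]
  exact div_le_div_of_nonneg_left (genChoose_nonneg (by linarith))
    (genChoose_pos (by linarith)) hshadow
end
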